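/- arXiv:0705.1687 — 2 statements merged into one kernel-verified Lean document; each statement's English description precedes it below -/
import Mathlib

section
/- Let X be a compact metric space with a Borel measure, k ≥ 1 an integer, and f ∈ L¹(X) nonnegative with ∫_X f = 1. Suppose there exist ε > 0 and r > 0 such that for every choice of k points p₁,…,p_k ∈ X one has ∫_{∪_{i=1}^k B_r(p_i)} f < 1 − ε. Then there exist ε̄ > 0 and r̄ > 0, depending only on ε, r, k and X (not on f), and k+1 points p̄₁,…,p̄_{k+1} ∈ X (depending on f), such that ∫_{B_{r̄}(p̄_i)} f > ε̄ for each i and the balls B_{2r̄}(p̄_i) are pairwise disjoint. -/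
open MeasureTheory Metric Set Function

/-- Covering lemma: if no k balls of radius r capture mass 1−ε of the probability
density f, then there are k+1 points whose r̄-balls each carry mass > ε̄ (with ε̄, r̄
depending only on ε, r, k and the space), the doubled balls being pairwise disjoint. -/
theorem stmt16 {X : Type*} [MetricSpace X] [CompactSpace X] [MeasurableSpace X] [BorelSpace X]
    (μ : Measure X) (k : ℕ) (hk : 1 ≤ k) (ε r : ℝ) (hε : 0 < ε) (hr : 0 < r) :
    ∃ εb : ℝ, 0 < εb ∧ ∃ rb : ℝ, 0 < rb ∧
      ∀ f : X → ℝ, (∀ x, 0 ≤ f x) → Integrable f μ → (∫ x, f x ∂μ) = 1 →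
      (∀ p : Fin k → X, (∫ x in ⋃ i, ball (p i) r, f x ∂μ) < 1 - ε) →
      ∃ pb : Fin (k + 1) → X,
        (∀ i, εb < ∫ x in ball (pb i) rb, f x ∂μ) ∧
          Pairwise (Disjoint on fun i => ball (pb i) (2 * rb)) := by
  classical
  set rb := r / 8 with hrb_def
  have hrb : 0 < rb := by positivity
  obtain ⟨t₀, -, ht₀fin, ht₀cov⟩ :=
    finite_cover_balls_of_compact (isCompact_univ (X := X)) hrb
  set s : Finset X := ht₀fin.toFinset with hs_def
  have hscov : ∀ x : X, ∃ y ∈ s, x ∈ ball y rb := by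
    intro x
    have hx := ht₀cov (mem_univ x)
    simp only [mem_iUnion, exists_prop] at hx
    obtain ⟨y, hy, hxy⟩ := hx
    exact ⟨y, ht₀fin.mem_toFinset.mpr hy, hxy⟩
  set N : ℕ := s.card with hN_def
  have hεb_pos : (0:ℝ) < ε / (2 * (N + 1)) := by positivity
  refine ⟨ε / (2 * (N + 1)), hεb_pos, rb, hrb, ?_⟩
  set εb := ε / (2 * (N + 1)) with hεb_def
  intro f hf0 hfi hf1 hcov
  -- X is nonempty
  have hXne : Nonempty X := by
    by_contra h
    rw [not_nonempty_iff] at h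
    rw [integral_of_isEmpty] at hf1
    norm_num at hf1
  obtain ⟨x₀⟩ := hXne
  set mass : X → ℝ := fun y => ∫ x in ball y rb, f x ∂μ with hmass_def
  set S' : Finset X := s.filter (fun y => εb < mass y) with hS'_def
  -- maximal 4rb-separated subset of S'
  set P : Finset X → Prop := fun t => (↑t : Set X).Pairwise (fun a b => 4 * rb < dist a b)
    with hP_def
  have hPne : (S'.powerset.filter P).Nonempty := by
    refine ⟨∅, ?_⟩
    simp [hP_def, Set.Pairwise]
  obtain ⟨T, hTmem, hTmax⟩ := Finset.exists_max_image _ Finset.card hPne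
  rw [Finset.mem_filter, Finset.mem_powerset] at hTmem
  obtain ⟨hTsub, hTpair⟩ := hTmem
  rw [hP_def] at hTpair
  by_cases hcard : k + 1 ≤ T.card
  · -- enough separated points: done
    obtain ⟨T', hT'sub, hT'card⟩ := Finset.exists_subset_card_eq hcard
    set e := Finset.equivFinOfCardEq hT'card
    refine ⟨fun i => ((e.symm i : T') : X), ?_, ?_⟩
    · intro i
      have hmem : ((e.symm i : T') : X) ∈ S' := hTsub (hT'sub (e.symm i).2)
      rw [hS'_def, Finset.mem_filter] at hmem
      exact hmem.2
    · intro i j hij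
      have hne : ((e.symm i : T') : X) ≠ ((e.symm j : T') : X) := by
        intro hEq
        exact hij (by simpa using e.symm.injective (Subtype.ext hEq))
      have hdist : 4 * rb < dist ((e.symm i : T') : X) ((e.symm j : T') : X) :=
        hTpair (hT'sub (e.symm i).2) (hT'sub (e.symm j).2) hne
      simp only [onFun]
      exact ball_disjoint_ball (by linarith)
  · -- few separated points: contradiction with hcov
    push_neg at hcard
    exfalso
    -- maximality: every point of S' is within 4rb of T
    have hmax : ∀ y ∈ S', ∃ t ∈ T, dist y t ≤ 4 * rb := by
      intro y hy
      by_contra h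
      push_neg at h
      have hyT : y ∉ T := by
        intro hyT
        have := h y hyT
        simp at this
        linarith
      have hins : insert y T ∈ S'.powerset.filter P := by
        rw [Finset.mem_filter, Finset.mem_powerset, hP_def]
        constructor
        · exact Finset.insert_subset hy hTsub
        · show ((insert y T : Finset X) : Set X).Pairwise fun a b => 4 * rb < dist a b
          rw [Finset.coe_insert]
          refine Set.pairwise_insert.mpr ⟨hTpair, ?_⟩
          intro b hb _
          exact ⟨h b hb, by rw [dist_comm]; exact h b hb⟩
      have hle := hTmax _ hins
      rw [Finset.card_insert_of_notMem hyT] at hle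
      omega
    -- build k points covering T
    set p : Fin k → X := fun i => T.toList.getD i x₀ with hp_def
    have hpT : ∀ t ∈ T, ∃ i : Fin k, p i = t := by
      intro t ht
      have hmem : t ∈ T.toList := Finset.mem_toList.mpr ht
      obtain ⟨n, hn⟩ := List.mem_iff_get.mp hmem
      have hlen : T.toList.length = T.card := Finset.length_toList T
      have hnk : (n : ℕ) < k := by
        have := n.2
        omega
      refine ⟨⟨n, hnk⟩, ?_⟩
      rw [hp_def]
      simp only
      rw [List.getD_eq_getElem _ _ (by omega)]
      simpa [List.get_eq_getElem] using hn
    set U : Set X := ⋃ i, ball (p i) r with hU_def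
    set V : Set X := ⋃ y ∈ (s \ S'), ball y rb with hV_def
    have hUmeas : MeasurableSet U := MeasurableSet.iUnion fun i => measurableSet_ball
    have hVmeas : MeasurableSet V :=
      (s \ S').measurableSet_biUnion fun y _ => measurableSet_ball
    -- the two families cover X
    have hcover : U ∪ V = univ := by
      ext x
      simp only [mem_univ, iff_true, mem_union]
      obtain ⟨y, hys, hxy⟩ := hscov x
      by_cases hyS : y ∈ S'
      · obtain ⟨t, htT, hdist⟩ := hmax y hyS
        obtain ⟨i, hip⟩ := hpT t htT
        left
        refine mem_iUnion.mpr ⟨i, ?_⟩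
        rw [hip, mem_ball]
        have h1 : dist x t ≤ dist x y + dist y t := dist_triangle x y t
        have h2 : dist x y < rb := mem_ball.mp hxy
        have : dist x t < 5 * rb := by linarith
        rw [hrb_def] at this
        linarith
      · right
        exact mem_iUnion₂.mpr ⟨y, Finset.mem_sdiff.mpr ⟨hys, hyS⟩, hxy⟩
    -- 1 ≤ ∫_U f + ∫_V f
    have hIU : Integrable (U.indicator f) μ := hfi.indicator hUmeas
    have hIV : Integrable (V.indicator f) μ := hfi.indicator hVmeas
    have h1 : (1:ℝ) ≤ (∫ x in U, f x ∂μ) + ∫ x in V, f x ∂μ := by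
      have hpt : ∀ x, f x ≤ U.indicator f x + V.indicator f x := by
        intro x
        have hx : x ∈ U ∪ V := hcover ▸ mem_univ x
        rcases hx with hxU | hxV
        · rw [indicator_of_mem hxU]
          have := indicator_nonneg (fun a _ => hf0 a) (s := V) x
          linarith
        · rw [indicator_of_mem hxV]
          have := indicator_nonneg (fun a _ => hf0 a) (s := U) x
          linarith
      calc (1:ℝ) = ∫ x, f x ∂μ := hf1.symm
        _ ≤ ∫ x, (U.indicator f x + V.indicator f x) ∂μ :=
            integral_mono hfi (hIU.add hIV) hpt
        _ = (∫ x, U.indicator f x ∂μ) + ∫ x, V.indicator f x ∂μ :=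
            integral_add hIU hIV
        _ = (∫ x in U, f x ∂μ) + ∫ x in V, f x ∂μ := by
            rw [integral_indicator hUmeas, integral_indicator hVmeas]
    -- ∫_V f is small
    have hVsmall : (∫ x in V, f x ∂μ) ≤ ε / 2 := by
      have hIsum : Integrable (fun x => ∑ y ∈ (s \ S'), (ball y rb).indicator f x) μ :=
        integrable_finset_sum _ fun y _ => hfi.indicator measurableSet_ball
      have hptV : ∀ x, V.indicator f x ≤ ∑ y ∈ (s \ S'), (ball y rb).indicator f x := by
        intro x
        by_cases hxV : x ∈ V
        · rw [indicator_of_mem hxV]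
          obtain ⟨y, hy, hxy⟩ := mem_iUnion₂.mp hxV
          calc f x = (ball y rb).indicator f x := (indicator_of_mem hxy f).symm
            _ ≤ _ := Finset.single_le_sum
                (f := fun y => (ball y rb).indicator f x)
                (fun i _ => indicator_nonneg (fun a _ => hf0 a) x) hy
        · rw [indicator_of_notMem hxV]
          exact Finset.sum_nonneg fun i _ => indicator_nonneg (fun a _ => hf0 a) x
      have hterm : ∀ y ∈ (s \ S'), (∫ x in ball y rb, f x ∂μ) ≤ εb := by
        intro y hy
        rw [Finset.mem_sdiff] at hy
        have : ¬ εb < mass y := by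
          intro hlt
          exact hy.2 (Finset.mem_filter.mpr ⟨hy.1, hlt⟩)
        exact not_lt.mp this
      calc (∫ x in V, f x ∂μ) = ∫ x, V.indicator f x ∂μ :=
            (integral_indicator hVmeas).symm
        _ ≤ ∫ x, (∑ y ∈ (s \ S'), (ball y rb).indicator f x) ∂μ :=
            integral_mono hIV hIsum hptV
        _ = ∑ y ∈ (s \ S'), ∫ x, (ball y rb).indicator f x ∂μ :=
            integral_finset_sum _ fun y _ => hfi.indicator measurableSet_ball
        _ = ∑ y ∈ (s \ S'), ∫ x in ball y rb, f x ∂μ := by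
            exact Finset.sum_congr rfl fun y _ => integral_indicator measurableSet_ball
        _ ≤ ∑ _y ∈ (s \ S'), εb := Finset.sum_le_sum hterm
        _ = (s \ S').card * εb := by rw [Finset.sum_const, nsmul_eq_mul]
        _ ≤ N * εb := by
            have hcard' : (s \ S').card ≤ N := Finset.card_le_card (Finset.sdiff_subset)
            have h' : ((s \ S').card : ℝ) ≤ (N : ℝ) := by exact_mod_cast hcard'
            exact mul_le_mul_of_nonneg_right h' hεb_pos.le
        _ ≤ ε / 2 := by
            have hN0 : (0:ℝ) ≤ (N : ℝ) := Nat.cast_nonneg N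
            have hD : (0:ℝ) < 2 * ((N:ℝ) + 1) := by linarith
            rw [hεb_def, ← mul_div_assoc, div_le_div_iff₀ hD two_pos]
            nlinarith [hε.le, hN0]
    -- contradiction
    have := hcov p
    rw [hU_def] at h1
    linarith
end

section
/- Let (Σ,g) be a closed Riemannian surface of unit volume, and suppose u ∈ C²(Σ) solves −Δ_g u = ρ₁(e^u/∫_Σ e^u dV_g − 1) − ρ₂(e^{−u}/∫_Σ e^{−u} dV_g − 1) with ρ₁ > 0, ρ₂ ∈ ℝ, and ū = 0. If the Green's function G of −Δ_g satisfies G(x,y) ≤ C₀ + (1/(2π)) log(1/d(x,y)), then for every p ≥ 1 with p·max(ρ₂,0) < π/2 there is a constant C (depending on p, ρ₂, Σ but not on u) such that ∫_Σ e^{−p u} dV_g ≤ C. -/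
/-!
As `ρ₁ ≥ 0` and `G ≥ -C₀`, the Green representation bounds `-u(x)` by a constant plus
`ρ₂⁺ ∫ L(x, y) w(y) dμ(y)`, where `L = (2π)⁻¹ log⁺ (1 / d)` dominates the singular part of `G` and
`w = e^{-u} / ∫ e^{-u}` is a probability density. Jensen's inequality for `w μ` then gives
`e^{-p u(x)} ≲ ∫ e^{p ρ₂⁺ L(x, y)} w(y) dμ(y) ≤ ∫ (1 + d(x, y)⁻¹) w(y) dμ(y)`, because
`p ρ₂⁺ ≤ 2π`. Integrating in `x`, Tonelli and the quadratic volume growth, which bounds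
`∫ d(x, y)⁻¹ dμ(x)` uniformly in `y`, finish the proof.
-/

open MeasureTheory Metric
open Real Set Filter Topology Function
open scoped ENNReal

section VolumeGrowth

variable {S : Type*} [PseudoMetricSpace S] [MeasurableSpace S] {μ : Measure S} {C : ℝ} {n : ℕ}

theorem nullSingletonClass_of_measure_ball_le (hn : n ≠ 0)
    (hvol : ∀ x r, 0 < r → μ (ball x r) ≤ ENNReal.ofReal (C * r ^ n)) :
    NullSingletonClass μ := by
  refine ⟨fun x => le_antisymm ?_ bot_le⟩
  have hlim : Tendsto (fun r : ℝ => ENNReal.ofReal (C * r ^ n)) (𝓝[>] 0) (𝓝 0) := by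
    have : Tendsto (fun r : ℝ => C * r ^ n) (𝓝[>] 0) (𝓝 (C * 0 ^ n)) :=
      ((continuous_const.mul (continuous_pow n)).tendsto 0).mono_left nhdsWithin_le_nhds
    simpa [zero_pow hn] using ENNReal.tendsto_ofReal this
  exact ge_of_tendsto hlim (eventually_nhdsWithin_of_forall fun r hr =>
    (measure_mono (singleton_subset_iff.2 (mem_ball_self hr))).trans (hvol x r hr))

theorem measure_superlevel_dist_rpow_neg_le
    (hvol : ∀ x r, 0 < r → μ (ball x r) ≤ ENNReal.ofReal (C * r ^ n))
    {s t : ℝ} (hs : 0 < s) (ht : 0 < t) (x : S) :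
    μ {y | t < dist x y ^ (-s)} ≤ ENNReal.ofReal (C * t ^ ((-s)⁻¹ * n)) := by
  have hsub : {y | t < dist x y ^ (-s)} ⊆ ball x (t ^ (-s)⁻¹) := fun y (hy : t < _) => by
    have hd : 0 < dist x y := by
      refine (dist_nonneg.lt_or_eq).resolve_right fun h => ?_
      rw [← h, zero_rpow (neg_ne_zero.2 hs.ne')] at hy
      exact ht.not_gt hy
    rw [mem_ball, dist_comm]
    exact (lt_rpow_inv_iff_of_neg hd ht (neg_lt_zero.2 hs)).2 hy
  calc μ {y | t < dist x y ^ (-s)} ≤ μ (ball x (t ^ (-s)⁻¹)) := measure_mono hsub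
    _ ≤ ENNReal.ofReal (C * (t ^ (-s)⁻¹) ^ n) := hvol x _ (rpow_pos_of_pos ht _)
    _ = ENNReal.ofReal (C * t ^ ((-s)⁻¹ * n)) := by rw [rpow_mul_natCast ht.le]

theorem exists_lintegral_dist_rpow_neg_le [IsFiniteMeasure μ] [OpensMeasurableSpace S]
    (hvol : ∀ x r, 0 < r → μ (ball x r) ≤ ENNReal.ofReal (C * r ^ n))
    {s : ℝ} (hs : 0 < s) (hsn : s < n) :
    ∃ M, 0 ≤ M ∧ ∀ x, ∫⁻ y, ENNReal.ofReal (dist x y ^ (-s)) ∂μ ≤ ENNReal.ofReal M := by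
  have hexp : (-s)⁻¹ * n < -1 := by
    rw [inv_neg, neg_mul, neg_lt_neg_iff, inv_mul_eq_div, one_lt_div hs]
    exact hsn
  set T := ∫⁻ t in Ioi (1 : ℝ), ENNReal.ofReal (C * t ^ ((-s)⁻¹ * n))
  have hT : T < ∞ :=
    lt_of_le_of_lt (lintegral_mono fun t => Real.ofReal_le_enorm _)
      ((integrableOn_Ioi_rpow_of_lt hexp one_pos).const_mul C).2
  refine ⟨(μ univ + T).toReal, ENNReal.toReal_nonneg, fun x => ?_⟩
  rw [ENNReal.ofReal_toReal (ENNReal.add_lt_top.2 ⟨measure_lt_top μ univ, hT⟩).ne,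
    lintegral_eq_lintegral_meas_lt μ (ae_of_all _ fun y => rpow_nonneg dist_nonneg _)
      (by fun_prop), ← Ioc_union_Ioi_eq_Ioi zero_le_one,
    lintegral_union measurableSet_Ioi Ioc_disjoint_Ioi_same]
  gcongr
  · calc ∫⁻ t in Ioc (0 : ℝ) 1, μ {y | t < dist x y ^ (-s)}
        ≤ ∫⁻ t in Ioc (0 : ℝ) 1, μ univ := lintegral_mono fun t => measure_mono (subset_univ _)
      _ = μ univ := by simp
  · exact setLIntegral_mono' measurableSet_Ioi fun t ht =>
      measure_superlevel_dist_rpow_neg_le hvol hs (zero_lt_one.trans ht) x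

theorem lintegral_one_add_inv_dist_le [IsProbabilityMeasure μ] {M : ℝ} (hM0 : 0 ≤ M)
    (hM : ∀ x, ∫⁻ y, ENNReal.ofReal (dist x y)⁻¹ ∂μ ≤ ENNReal.ofReal M) (y : S) :
    ∫⁻ x, ENNReal.ofReal (1 + (dist x y)⁻¹) ∂μ ≤ ENNReal.ofReal (1 + M) := by
  simp_rw [ENNReal.ofReal_add zero_le_one (inv_nonneg.2 dist_nonneg), dist_comm _ y]
  rw [lintegral_add_left measurable_const, lintegral_const, measure_univ, mul_one,
    ENNReal.ofReal_add zero_le_one hM0]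
  gcongr
  exact hM y

end VolumeGrowth

section RealInequalities

theorem posLog_le_log_one_add {x : ℝ} (hx : 0 ≤ x) : log⁺ x ≤ log (1 + x) := by
  rw [posLog_eq_log_max_one hx]
  exact log_le_log (by positivity) (max_le (by linarith) (by linarith))

theorem posLog_le_self {x : ℝ} (hx : 0 ≤ x) : log⁺ x ≤ x :=
  (posLog_le_log_one_add hx).trans (by linarith [log_le_sub_one_of_pos (by linarith : 0 < 1 + x)])

theorem exp_mul_posLog_le {a x : ℝ} (ha1 : a ≤ 1) (hx : 0 ≤ x) :
    exp (a * log⁺ x) ≤ 1 + x :=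
  calc exp (a * log⁺ x) ≤ exp (log (1 + x)) := by
        gcongr
        exact (mul_le_of_le_one_left posLog_nonneg ha1).trans (posLog_le_log_one_add hx)
    _ = 1 + x := exp_log (by linarith)

theorem neg_mul_le_of_bounds {g φ c ℓ m : ℝ} (hℓ : 0 ≤ ℓ) (hlo : -c ≤ g)
    (hhi : g ≤ c + ℓ) (hφm : -φ ≤ m) (hm : 0 ≤ m) : -(g * φ) ≤ c * |φ| + ℓ * m := by
  rcases le_total 0 φ with hφ | hφ
  · rw [abs_of_nonneg hφ]
    nlinarith [mul_nonneg hℓ hm]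
  · rw [abs_of_nonpos hφ]
    nlinarith

theorem neg_mul_mean_field_le {g ℓ c ρ₁ ρ₂ v w : ℝ} (hℓ : 0 ≤ ℓ) (hlo : -c ≤ g)
    (hhi : g ≤ |c| + ℓ) (hρ₁ : 0 ≤ ρ₁) (hv : 0 ≤ v) (hw : 0 ≤ w) :
    -(g * (ρ₁ * (v - 1) - ρ₂ * (w - 1)))
      ≤ |c| * (ρ₁ * v + |ρ₂| * w + (ρ₁ + |ρ₂|)) + ((ρ₁ + |ρ₂|) * ℓ + max ρ₂ 0 * (ℓ * w)) := by
  have hρ₁v := mul_nonneg hρ₁ hv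
  have habs : |ρ₁ * (v - 1) - ρ₂ * (w - 1)| ≤ ρ₁ * v + |ρ₂| * w + (ρ₁ + |ρ₂|) := by
    rw [abs_le]
    constructor <;> linarith [neg_abs_le ρ₂, le_abs_self ρ₂,
      mul_le_mul_of_nonneg_right (neg_abs_le ρ₂) hw, mul_le_mul_of_nonneg_right (le_abs_self ρ₂) hw]
  calc -(g * (ρ₁ * (v - 1) - ρ₂ * (w - 1)))
      ≤ |c| * |ρ₁ * (v - 1) - ρ₂ * (w - 1)| + ℓ * (ρ₁ + |ρ₂| + max ρ₂ 0 * w) :=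
        neg_mul_le_of_bounds hℓ ((neg_le_neg (le_abs_self c)).trans hlo) hhi
          (by linarith [neg_abs_le ρ₂, mul_le_mul_of_nonneg_right (le_max_left ρ₂ 0) hw])
          (add_nonneg (add_nonneg hρ₁ (abs_nonneg _)) (mul_nonneg (le_max_right _ _) hw))
    _ ≤ _ := by linear_combination mul_le_mul_of_nonneg_left habs (abs_nonneg c)

end RealInequalities

section Integrals

variable {α : Type*} [MeasurableSpace α] {μ : Measure α}

theorem integral_le_integral_of_ae_le_of_nonneg {f g : α → ℝ} (hfg : f ≤ᵐ[μ] g)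
    (hg0 : 0 ≤ᵐ[μ] g) (hg : Integrable g μ) : ∫ x, f x ∂μ ≤ ∫ x, g x ∂μ := by
  by_cases hf : Integrable f μ
  · exact integral_mono_ae hf hg hfg
  · rw [integral_undef hf]
    exact integral_nonneg_of_ae hg0

theorem integrable_and_integral_le_of_lintegral_le {f : α → ℝ} {M : ℝ} (hM : 0 ≤ M)
    (hf0 : 0 ≤ᵐ[μ] f) (hf : AEStronglyMeasurable f μ)
    (hfM : ∫⁻ x, ENNReal.ofReal (f x) ∂μ ≤ ENNReal.ofReal M) :
    Integrable f μ ∧ ∫ x, f x ∂μ ≤ M := by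
  refine ⟨⟨hf, (hasFiniteIntegral_iff_ofReal hf0).2 (hfM.trans_lt ENNReal.ofReal_lt_top)⟩, ?_⟩
  rw [integral_eq_lintegral_of_nonneg_ae hf0 hf]
  exact ENNReal.toReal_le_of_le_ofReal hM hfM

/-- Jensen's inequality for `exp` and the probability measure `w μ`, from the tangent line of
`exp` at the mean. -/
theorem exp_integral_mul_le_integral_exp_mul {φ w : α → ℝ} (hw0 : ∀ y, 0 ≤ w y)
    (hw : Integrable w μ) (hw1 : ∫ y, w y ∂μ = 1) (hφw : Integrable (fun y => φ y * w y) μ)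
    (hexp : Integrable (fun y => exp (φ y) * w y) μ) :
    exp (∫ y, φ y * w y ∂μ) ≤ ∫ y, exp (φ y) * w y ∂μ := by
  set a := ∫ y, φ y * w y ∂μ
  have htangent : ∀ y, exp a * (φ y - a + 1) * w y ≤ exp (φ y) * w y := fun y => by
    have : exp a * (φ y - a + 1) ≤ exp (φ y) := by
      calc exp a * (φ y - a + 1) ≤ exp a * exp (φ y - a) := by gcongr; exact add_one_le_exp _
        _ = exp (φ y) := by rw [← exp_add, add_sub_cancel]
    exact mul_le_mul_of_nonneg_right this (hw0 y)
  have hsplit : (fun y => exp a * (φ y - a + 1) * w y)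
      = fun y => exp a * (φ y * w y) + exp a * (1 - a) * w y := by
    ext y; ring
  have hint : Integrable (fun y => exp a * (φ y - a + 1) * w y) μ := by
    rw [hsplit]; exact (hφw.const_mul _).add (hw.const_mul _)
  calc exp a = ∫ y, exp a * (φ y - a + 1) * w y ∂μ := by
        rw [hsplit, integral_add (hφw.const_mul _) (hw.const_mul _), integral_const_mul,
          integral_const_mul, hw1]
        ring
    _ ≤ ∫ y, exp (φ y) * w y ∂μ := integral_mono hint hexp htangent

theorem lintegral_ofReal_integral_mul_le [SFinite μ] {k : α → α → ℝ} {w : α → ℝ} {M : ℝ}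
    (hk : Measurable (uncurry k)) (hk0 : ∀ x y, 0 ≤ k x y) (hw : Measurable w) (hw0 : ∀ y, 0 ≤ w y)
    (hkM : ∀ y, ∫⁻ x, ENNReal.ofReal (k x y) ∂μ ≤ ENNReal.ofReal M) :
    ∫⁻ x, ENNReal.ofReal (∫ y, k x y * w y ∂μ) ∂μ
      ≤ ENNReal.ofReal M * ∫⁻ y, ENNReal.ofReal (w y) ∂μ := by
  have hpt : ∀ x, ENNReal.ofReal (∫ y, k x y * w y ∂μ)
      ≤ ∫⁻ y, ENNReal.ofReal (k x y) * ENNReal.ofReal (w y) ∂μ := fun x =>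
    calc ENNReal.ofReal (∫ y, k x y * w y ∂μ) ≤ ‖∫ y, k x y * w y ∂μ‖ₑ := Real.ofReal_le_enorm _
      _ ≤ ∫⁻ y, ‖k x y * w y‖ₑ ∂μ := enorm_integral_le_lintegral_enorm _
      _ = ∫⁻ y, ENNReal.ofReal (k x y) * ENNReal.ofReal (w y) ∂μ := by
        simp_rw [← ENNReal.ofReal_mul (hk0 x _),
          ← Real.enorm_eq_ofReal (mul_nonneg (hk0 x _) (hw0 _))]
  calc ∫⁻ x, ENNReal.ofReal (∫ y, k x y * w y ∂μ) ∂μ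
      ≤ ∫⁻ x, ∫⁻ y, ENNReal.ofReal (k x y) * ENNReal.ofReal (w y) ∂μ ∂μ := lintegral_mono hpt
    _ = ∫⁻ y, (∫⁻ x, ENNReal.ofReal (k x y) ∂μ) * ENNReal.ofReal (w y) ∂μ := by
        rw [lintegral_lintegral_swap (by fun_prop)]
        congr 1 with y
        exact lintegral_mul_const _ (by fun_prop)
    _ ≤ ∫⁻ y, ENNReal.ofReal M * ENNReal.ofReal (w y) ∂μ := by gcongr with y; exact hkM y
    _ = ENNReal.ofReal M * ∫⁻ y, ENNReal.ofReal (w y) ∂μ := lintegral_const_mul _ (by fun_prop)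

theorem integrable_and_integral_integral_mul_le [SFinite μ] {k : α → α → ℝ} {w : α → ℝ} {M : ℝ}
    (hM : 0 ≤ M) (hk : Measurable (uncurry k)) (hk0 : ∀ x y, 0 ≤ k x y) (hw : Measurable w)
    (hw0 : ∀ y, 0 ≤ w y) (hw1 : ∫ y, w y ∂μ = 1)
    (hkM : ∀ y, ∫⁻ x, ENNReal.ofReal (k x y) ∂μ ≤ ENNReal.ofReal M) :
    Integrable (fun x => ∫ y, k x y * w y ∂μ) μ ∧ ∫ x, ∫ y, k x y * w y ∂μ ∂μ ≤ M := by
  have hmeas : AEStronglyMeasurable (fun x => ∫ y, k x y * w y ∂μ) μ :=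
    (hk.mul (hw.comp measurable_snd)).stronglyMeasurable.integral_prod_right'.aestronglyMeasurable
  refine integrable_and_integral_le_of_lintegral_le hM
    (ae_of_all _ fun x => integral_nonneg fun y => mul_nonneg (hk0 x y) (hw0 y)) hmeas ?_
  calc ∫⁻ x, ENNReal.ofReal (∫ y, k x y * w y ∂μ) ∂μ
      ≤ ENNReal.ofReal M * ∫⁻ y, ENNReal.ofReal (w y) ∂μ :=
        lintegral_ofReal_integral_mul_le hk hk0 hw hw0 hkM
    _ = ENNReal.ofReal M := by
        rw [← ofReal_integral_eq_lintegral_ofReal (Integrable.of_integral_ne_zero (by simp [hw1]))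
          (ae_of_all _ hw0), hw1, ENNReal.ofReal_one, mul_one]

end Integrals

section LogKernel

variable {S : Type*} [PseudoMetricSpace S]

noncomputable def logKernel (x y : S) : ℝ := (2 * π)⁻¹ * log⁺ (dist x y)⁻¹

theorem logKernel_nonneg (x y : S) : 0 ≤ logKernel x y :=
  mul_nonneg (by positivity) posLog_nonneg

theorem logKernel_le (x y : S) : logKernel x y ≤ (2 * π)⁻¹ * (dist x y)⁻¹ :=
  mul_le_mul_of_nonneg_left (posLog_le_self (inv_nonneg.2 dist_nonneg)) (by positivity)

theorem measurable_logKernel [MeasurableSpace S] [OpensMeasurableSpace S] (x : S) :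
    Measurable (logKernel x) := by
  unfold logKernel; fun_prop

theorem exp_mul_logKernel_le {a : ℝ} (ha : a ≤ 2 * π) (x y : S) :
    exp (a * logKernel x y) ≤ 1 + (dist x y)⁻¹ := by
  rw [logKernel, ← mul_assoc]
  exact exp_mul_posLog_le (by rw [← div_eq_mul_inv]; exact div_le_one_of_le₀ ha (by positivity))
    (inv_nonneg.2 dist_nonneg)

theorem integrable_logKernel [MeasurableSpace S] [OpensMeasurableSpace S] {μ : Measure S} {x : S}
    (hk : Integrable (fun y => (dist x y)⁻¹) μ) :
    Integrable (logKernel x) μ :=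
  (hk.const_mul _).mono' (measurable_logKernel x).aestronglyMeasurable <| ae_of_all _ fun y => by
    rw [Real.norm_of_nonneg (logKernel_nonneg x y)]; exact logKernel_le x y

theorem le_abs_add_logKernel {G : S → S → ℝ} {C₀ : ℝ}
    (hGub : ∀ x y, x ≠ y → G x y ≤ C₀ + (1 / (2 * π)) * log (1 / dist x y)) {x y : S}
    (hxy : x ≠ y) : G x y ≤ |C₀| + logKernel x y := by
  refine (hGub x y hxy).trans (add_le_add (le_abs_self C₀) ?_)
  rw [logKernel, one_div, one_div]
  exact mul_le_mul_of_nonneg_left (le_max_right _ _) (by positivity)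

end LogKernel

section GreenEstimate

variable {S : Type*} [MetricSpace S] [CompactSpace S] [MeasurableSpace S] [BorelSpace S]
  {μ : Measure S} {G : S → S → ℝ} {C₀ ρ₁ ρ₂ : ℝ} {v w : S → ℝ}

theorem Continuous.integrable_of_compactSpace [IsFiniteMeasure μ] {f : S → ℝ}
    (hf : Continuous f) : Integrable f μ :=
  (BoundedContinuousFunction.mkOfCompact ⟨f, hf⟩).integrable μ

theorem Continuous.memLp_top_of_compactSpace {f : S → ℝ} (hf : Continuous f) : MemLp f ⊤ μ :=
  (BoundedContinuousFunction.mkOfCompact ⟨f, hf⟩).memLp_top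

theorem integral_exp_div_integral_exp [IsFiniteMeasure μ] [NeZero μ] {f : S → ℝ}
    (hf : Continuous f) : ∫ y, exp (f y) / ∫ z, exp (f z) ∂μ ∂μ = 1 := by
  rw [integral_div]
  exact div_self (integral_exp_pos (hf.rexp.integrable_of_compactSpace)).ne'

theorem neg_integral_green_mul_le [IsProbabilityMeasure μ] [NullSingletonClass μ]
    (hGlb : ∀ x y, -C₀ ≤ G x y)
    (hGub : ∀ x y, x ≠ y → G x y ≤ C₀ + (1 / (2 * π)) * log (1 / dist x y))
    (hρ₁ : 0 ≤ ρ₁) (hv0 : ∀ y, 0 ≤ v y) (hv : Continuous v) (hv1 : ∫ y, v y ∂μ = 1)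
    (hw0 : ∀ y, 0 ≤ w y) (hw : Continuous w) (hw1 : ∫ y, w y ∂μ = 1)
    {x : S} (hL : Integrable (logKernel x) μ) :
    -∫ y, G x y * (ρ₁ * (v y - 1) - ρ₂ * (w y - 1)) ∂μ
      ≤ 2 * |C₀| * (ρ₁ + |ρ₂|) + (ρ₁ + |ρ₂|) * ∫ y, logKernel x y ∂μ
        + max ρ₂ 0 * ∫ y, logKernel x y * w y ∂μ := by
  set K := ρ₁ + |ρ₂|
  have hvi : Integrable v μ := hv.integrable_of_compactSpace
  have hwi : Integrable w μ := hw.integrable_of_compactSpace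
  have hLw : Integrable (fun y => logKernel x y * w y) μ :=
    hL.mul_of_top_left hw.memLp_top_of_compactSpace
  have hmass : Integrable (fun y => ρ₁ * v y + |ρ₂| * w y) μ :=
    (hvi.const_mul ρ₁).add (hwi.const_mul _)
  have hreg : Integrable (fun y => |C₀| * (ρ₁ * v y + |ρ₂| * w y + K)) μ :=
    (hmass.add (integrable_const K)).const_mul _
  have hsing : Integrable (fun y => K * logKernel x y + max ρ₂ 0 * (logKernel x y * w y)) μ :=
    (hL.const_mul K).add (hLw.const_mul _)
  have hmaj : ∀ᵐ y ∂μ, -(G x y * (ρ₁ * (v y - 1) - ρ₂ * (w y - 1)))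
      ≤ |C₀| * (ρ₁ * v y + |ρ₂| * w y + K)
        + (K * logKernel x y + max ρ₂ 0 * (logKernel x y * w y)) := by
    filter_upwards [μ.ae_ne x] with y hy
    exact neg_mul_mean_field_le (logKernel_nonneg x y) (hGlb x y)
      (le_abs_add_logKernel hGub hy.symm) hρ₁ (hv0 y) (hw0 y)
  rw [← integral_neg]
  refine (integral_le_integral_of_ae_le_of_nonneg hmaj (ae_of_all _ fun y => ?_)
    (hreg.add hsing)).trans_eq ?_
  · have := hv0 y; have := hw0 y; have := logKernel_nonneg x y
    positivity
  rw [integral_add hreg hsing, integral_const_mul,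
    integral_add hmass (integrable_const K), integral_add (hvi.const_mul ρ₁) (hwi.const_mul _),
    integral_add (hL.const_mul K) (hLw.const_mul _), integral_const_mul, integral_const_mul,
    integral_const_mul, integral_const_mul, hv1, hw1, integral_const]
  simp only [probReal_univ, smul_eq_mul, one_mul]
  ring

theorem exp_neg_mul_integral_green_mul_le [IsProbabilityMeasure μ] [NullSingletonClass μ]
    (hGlb : ∀ x y, -C₀ ≤ G x y)
    (hGub : ∀ x y, x ≠ y → G x y ≤ C₀ + (1 / (2 * π)) * log (1 / dist x y))
    (hρ₁ : 0 ≤ ρ₁) (hv0 : ∀ y, 0 ≤ v y) (hv : Continuous v) (hv1 : ∫ y, v y ∂μ = 1)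
    (hw0 : ∀ y, 0 ≤ w y) (hw : Continuous w) (hw1 : ∫ y, w y ∂μ = 1)
    {p M : ℝ} (hp : 0 ≤ p) (hpρ₂ : p * max ρ₂ 0 ≤ 2 * π) {x : S}
    (hk : Integrable (fun y => (dist x y)⁻¹) μ) (hkM : ∫ y, (dist x y)⁻¹ ∂μ ≤ M) :
    exp (-p * ∫ y, G x y * (ρ₁ * (v y - 1) - ρ₂ * (w y - 1)) ∂μ)
      ≤ exp (p * (2 * |C₀| * (ρ₁ + |ρ₂|) + (ρ₁ + |ρ₂|) * ((2 * π)⁻¹ * M)))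
        * ∫ y, (1 + (dist x y)⁻¹) * w y ∂μ := by
  set a := p * max ρ₂ 0
  set C₁ := 2 * |C₀| * (ρ₁ + |ρ₂|) + (ρ₁ + |ρ₂|) * ((2 * π)⁻¹ * M)
  have hL := integrable_logKernel hk
  have hwM : MemLp w ⊤ μ := hw.memLp_top_of_compactSpace
  have hLM : ∫ y, logKernel x y ∂μ ≤ (2 * π)⁻¹ * M :=
    calc ∫ y, logKernel x y ∂μ ≤ ∫ y, (2 * π)⁻¹ * (dist x y)⁻¹ ∂μ :=
          integral_mono hL (hk.const_mul _) (logKernel_le x)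
      _ ≤ (2 * π)⁻¹ * M := by rw [integral_const_mul]; gcongr
  have hLw : Integrable (fun y => a * logKernel x y * w y) μ :=
    (hL.const_mul a).mul_of_top_left hwM
  have hkw : Integrable (fun y => (1 + (dist x y)⁻¹) * w y) μ :=
    ((integrable_const 1).add hk).mul_of_top_left hwM
  have hexp_le : ∀ y, exp (a * logKernel x y) * w y ≤ (1 + (dist x y)⁻¹) * w y := fun y =>
    mul_le_mul_of_nonneg_right (exp_mul_logKernel_le hpρ₂ x y) (hw0 y)
  have hexp : Integrable (fun y => exp (a * logKernel x y) * w y) μ :=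
    hkw.mono' (((measurable_logKernel x).const_mul a).exp.mul hw.measurable).aestronglyMeasurable
      (ae_of_all _ fun y => by
        rw [Real.norm_of_nonneg (mul_nonneg (exp_pos _).le (hw0 y))]; exact hexp_le y)
  have hU := neg_integral_green_mul_le (ρ₂ := ρ₂) hGlb hGub hρ₁ hv0 hv hv1 hw0 hw hw1 hL
  have hLM' := mul_le_mul_of_nonneg_left
    (mul_le_mul_of_nonneg_left hLM (add_nonneg hρ₁ (abs_nonneg ρ₂))) hp
  have hexponent : -p * ∫ y, G x y * (ρ₁ * (v y - 1) - ρ₂ * (w y - 1)) ∂μ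
      ≤ p * C₁ + ∫ y, a * logKernel x y * w y ∂μ := by
    simp_rw [mul_assoc a]
    rw [integral_const_mul]
    linear_combination mul_le_mul_of_nonneg_left hU hp + hLM'
  calc exp (-p * ∫ y, G x y * (ρ₁ * (v y - 1) - ρ₂ * (w y - 1)) ∂μ)
      ≤ exp (p * C₁) * exp (∫ y, a * logKernel x y * w y ∂μ) := by
        rw [← exp_add]; exact exp_le_exp.2 hexponent
    _ ≤ exp (p * C₁) * ∫ y, exp (a * logKernel x y) * w y ∂μ := by
        gcongr
        exact exp_integral_mul_le_integral_exp_mul hw0 hw.integrable_of_compactSpace hw1 hLw hexp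
    _ ≤ _ := mul_le_mul_of_nonneg_left (integral_mono hexp hkw hexp_le) (exp_pos _).le

end GreenEstimate

theorem stmt17_general {S : Type*} [MetricSpace S] [CompactSpace S] [MeasurableSpace S] [BorelSpace S]
    (μ : Measure S) [IsProbabilityMeasure μ] (Cv C₀ : ℝ)
    (hvol : ∀ (x : S) (r : ℝ), 0 < r → μ (ball x r) ≤ ENNReal.ofReal (Cv * r ^ 2))
    (G : S → S → ℝ)
    (hGlb : ∀ x y, -C₀ ≤ G x y)
    (hGub : ∀ x y, x ≠ y → G x y ≤ C₀ + (1 / (2 * Real.pi)) * Real.log (1 / dist x y))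
    (ρ₁ ρ₂ : ℝ) (hρ₁ : 0 < ρ₁)
    (p : ℝ) (hp : 1 ≤ p) (hpρ₂ : p * max ρ₂ 0 < Real.pi / 2) :
    ∃ C : ℝ, ∀ u : S → ℝ, Continuous u →
      (∫ x, u x ∂μ) = 0 →
      (∀ x : S, u x = ∫ y, G x y *
          (ρ₁ * (Real.exp (u y) / (∫ z, Real.exp (u z) ∂μ) - 1) -
            ρ₂ * (Real.exp (-u y) / (∫ z, Real.exp (-u z) ∂μ) - 1)) ∂μ) →
      (∫ x, Real.exp (-p * u x) ∂μ) ≤ C := by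
  have := nullSingletonClass_of_measure_ball_le two_ne_zero hvol
  obtain ⟨M, hM0, hM⟩ := exists_lintegral_dist_rpow_neg_le hvol one_pos (by norm_num : (1 : ℝ) < 2)
  simp only [rpow_neg_one] at hM
  have hk : ∀ x, Integrable (fun y => (dist x y)⁻¹) μ ∧ ∫ y, (dist x y)⁻¹ ∂μ ≤ M := fun x =>
    integrable_and_integral_le_of_lintegral_le hM0 (ae_of_all _ fun y => inv_nonneg.2 dist_nonneg)
      (by fun_prop) (hM x)
  set E := exp (p * (2 * |C₀| * (ρ₁ + |ρ₂|) + (ρ₁ + |ρ₂|) * ((2 * π)⁻¹ * M)))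
  refine ⟨E * (1 + M), fun u hu _ hrep => ?_⟩
  have hw1 := integral_exp_div_integral_exp (μ := μ) (f := fun y => -u y) (by fun_prop)
  have hpt : ∀ x, exp (-p * u x)
      ≤ E * ∫ y, (1 + (dist x y)⁻¹) * (exp (-u y) / ∫ z, exp (-u z) ∂μ) ∂μ := fun x => by
    rw [hrep x]
    exact exp_neg_mul_integral_green_mul_le hGlb hGub hρ₁.le (fun y => by positivity)
      (by fun_prop) (integral_exp_div_integral_exp hu) (fun y => by positivity) (by fun_prop) hw1
      (zero_le_one.trans hp) (by linarith [pi_pos]) (hk x).1 (hk x).2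
  have hT := integrable_and_integral_integral_mul_le (by linarith) (by fun_prop)
    (fun x y => by positivity) (by fun_prop) (fun y => by positivity) hw1
    (lintegral_one_add_inv_dist_le hM0 hM)
  calc ∫ x, exp (-p * u x) ∂μ
      ≤ ∫ x, E * ∫ y, (1 + (dist x y)⁻¹) * (exp (-u y) / ∫ z, exp (-u z) ∂μ) ∂μ ∂μ :=
        integral_mono (by fun_prop : Continuous _).integrable_of_compactSpace (hT.1.const_mul _) hpt
    _ ≤ _ := by rw [integral_const_mul]; gcongr; exact hT.2

/-- Brezis–Merle type uniform integrability: on a closed surface of unit volume (modelled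
as a compact metric probability space with two-dimensional volume bound), if u solves the
mean field equation with turbulence — expressed through the Green representation with mean
zero — with ρ₁ > 0, and the Green's function G satisfies the logarithmic upper bound,
a uniform lower bound and has zero average, then for every p ≥ 1 with p·max(ρ₂,0) < π/2
the integral ∫ e^{−pu} is bounded by a constant independent of u. -/
theorem stmt17 {S : Type*} [MetricSpace S] [CompactSpace S] [MeasurableSpace S] [BorelSpace S]
    (μ : Measure S) [IsProbabilityMeasure μ] (Cv C₀ : ℝ) (hCv : 0 < Cv)
    (hvol : ∀ (x : S) (r : ℝ), 0 < r → μ (ball x r) ≤ ENNReal.ofReal (Cv * r ^ 2))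
    (G : S → S → ℝ)
    (hGlb : ∀ x y, -C₀ ≤ G x y)
    (hGub : ∀ x y, x ≠ y → G x y ≤ C₀ + (1 / (2 * Real.pi)) * Real.log (1 / dist x y))
    (hGzero : ∀ x, (∫ y, G x y ∂μ) = 0)
    (ρ₁ ρ₂ : ℝ) (hρ₁ : 0 < ρ₁)
    (p : ℝ) (hp : 1 ≤ p) (hpρ₂ : p * max ρ₂ 0 < Real.pi / 2) :
    ∃ C : ℝ, ∀ u : S → ℝ, Continuous u →
      (∫ x, u x ∂μ) = 0 →
      (∀ x : S, u x = ∫ y, G x y *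
          (ρ₁ * (Real.exp (u y) / (∫ z, Real.exp (u z) ∂μ) - 1) -
            ρ₂ * (Real.exp (-u y) / (∫ z, Real.exp (-u z) ∂μ) - 1)) ∂μ) →
      (∫ x, Real.exp (-p * u x) ∂μ) ≤ C :=
  stmt17_general μ Cv C₀ hvol G hGlb hGub ρ₁ ρ₂ hρ₁ p hp hpρ₂
end
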